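/- A partition maximizing the lexicographic order of the non-increasingly sorted utility sequence over all partitions of the agents is Pareto optimal, core stable, and individually stable. -/

import Mathlib

/-- A partition of the agents of type `α`, given as the map sending each agent to her
coalition: every agent belongs to her own coalition, and the coalitions are consistent. -/
def IsPartitionFn {α : Type*} [DecidableEq α] (C : α → Finset α) : Prop :=
  (∀ i, i ∈ C i) ∧ ∀ i j, i ∈ C j → C i = C j

/-- The social welfare of a partition: the sum of the agents' utilities. -/
noncomputable def welfare {α : Type*} [Fintype α] (U : Finset α → ℝ) (C : α → Finset α) : ℝ :=
  ∑ i, U (C i)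

/-- `C'` Pareto dominates `C`. -/
def ParetoDominates {α : Type*} (U : Finset α → ℝ) (C C' : α → Finset α) : Prop :=
  (∀ i, U (C i) ≤ U (C' i)) ∧ ∃ i, U (C i) < U (C' i)

/-- No partition Pareto dominates `C`. -/
def ParetoOptimal {α : Type*} [DecidableEq α] (U : Finset α → ℝ) (C : α → Finset α) : Prop :=
  ¬ ∃ C', IsPartitionFn C' ∧ ParetoDominates U C C'

/-- No nonempty coalition blocks `C`. -/
def CoreStable {α : Type*} (U : Finset α → ℝ) (C : α → Finset α) : Prop :=
  ¬ ∃ S : Finset α, S.Nonempty ∧ ∀ i ∈ S, U (C i) < U S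

/-- No agent can beneficially move to an existing (possibly empty) coalition without
making the members of that coalition worse off. -/
def IndividuallyStable {α : Type*} [DecidableEq α] (U : Finset α → ℝ) (C : α → Finset α) : Prop :=
  ¬ ∃ i T, i ∉ T ∧ (T = ∅ ∨ ((∃ j, C j = T) ∧ U T ≤ U (insert i T))) ∧
    U (C i) < U (insert i T)

/-- No agent can beneficially move to an existing (possibly empty) coalition. -/
def NashStable {α : Type*} [DecidableEq α] (U : Finset α → ℝ) (C : α → Finset α) : Prop :=
  ¬ ∃ i T, i ∉ T ∧ (T = ∅ ∨ ∃ j, C j = T) ∧ U (C i) < U (insert i T)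

/-- The sequence of the agents' utilities in partition `C`, sorted in non-increasing order. -/
noncomputable def psi {α : Type*} [Fintype α] (U : Finset α → ℝ) (C : α → Finset α) : List ℝ :=
  (Finset.univ.val.map fun i => U (C i)).sort (· ≥ ·)

/-!
Moving agents so that nobody at or above some utility level `t₀` loses, while some agent
below `t₀` reaches it, strictly increases the number of agents at level `≥ t` for `t = t₀`
and does not decrease it for any `t ≥ t₀`; for non-increasingly sorted sequences this forces
a lexicographic increase of `ψ`. A Pareto improvement is such a move with `t₀` the new
utility of a strictly improving agent. A blocking coalition `S`, or the coalition `T ∪ {i}`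
of a deviation violating individual stability, becomes one once it is split off from the partition,
with `t₀ = U S`: agents at level `≥ t₀` are either outside `S` and keep their coalition, or
(for the deviation) members of `T`, who do not lose by admitting `i`.
-/

section LexOfCount

variable {β : Type*} [LinearOrder β]

lemma List.countP_le_eq_zero_of_head_lt {b t : β} {M : List β}
    (hM : (b :: M).Pairwise (· ≥ ·)) (hb : b < t) :
    (b :: M).countP (fun x => t ≤ x) = 0 := by
  refine List.countP_eq_zero.mpr fun x hx => ?_
  have hxb : x ≤ b := by
    rcases List.mem_cons.mp hx with rfl | hx
    · exact le_rfl
    · exact List.rel_of_pairwise_cons hM hx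
  simpa using hxb.trans_lt hb

lemma List.lex_lt_of_countP_le_of_countP_lt {t₀ : β} :
    ∀ {L M : List β}, L.Pairwise (· ≥ ·) → M.Pairwise (· ≥ ·) →
      (∀ t, t₀ ≤ t → L.countP (fun x => t ≤ x) ≤ M.countP (fun x => t ≤ x)) →
      L.countP (fun x => t₀ ≤ x) < M.countP (fun x => t₀ ≤ x) →
      List.Lex (· < ·) L M
  | [], [], _, _, _, hlt => by simp at hlt
  | [], _ :: _, _, _, _, _ => List.Lex.nil
  | _ :: _, [], _, _, _, hlt => by simp at hlt
  | a :: L, b :: M, hL, hM, hle, hlt => by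
    rcases lt_trichotomy a b with hab | rfl | hba
    · exact List.Lex.rel hab
    · refine List.Lex.cons (List.lex_lt_of_countP_le_of_countP_lt (t₀ := t₀)
        hL.of_cons hM.of_cons (fun t ht => ?_) ?_)
      · have := hle t ht
        simp only [List.countP_cons] at this
        omega
      · simp only [List.countP_cons] at hlt
        omega
    · exfalso
      rcases le_or_gt t₀ a with hta | hat
      · have := hle a hta
        rw [List.countP_le_eq_zero_of_head_lt hM hba, List.countP_cons_of_pos (by simp)] at this
        omega
      · rw [List.countP_le_eq_zero_of_head_lt hM (hba.trans hat)] at hlt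
        omega

end LexOfCount

section Psi

open Finset

variable {α : Type*} [Fintype α]

lemma psi_pairwise_ge (U : Finset α → ℝ) (C : α → Finset α) :
    (psi U C).Pairwise (· ≥ ·) :=
  Multiset.pairwise_sort _ _

lemma psi_countP_le (U : Finset α → ℝ) (C : α → Finset α) (t : ℝ) :
    (psi U C).countP (fun x => t ≤ x) = #{i | t ≤ U (C i)} := by
  rw [← Multiset.coe_countP, psi, Multiset.sort_eq, Multiset.countP_map]
  rfl

lemma psi_lex_lt_of_threshold {U : Finset α → ℝ} {C C' : α → Finset α} (t₀ : ℝ)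
    (htop : ∀ x, t₀ ≤ U (C x) → U (C x) ≤ U (C' x))
    (hup : ∃ i, U (C i) < t₀ ∧ t₀ ≤ U (C' i)) :
    List.Lex (· < ·) (psi U C) (psi U C') := by
  obtain ⟨i, hi, hi'⟩ := hup
  have hsub : ∀ t, t₀ ≤ t → ({x | t ≤ U (C x)} : Finset α) ⊆
      ({x | t ≤ U (C' x)} : Finset α) := by
    intro t ht x
    simp only [mem_filter, mem_univ, true_and]
    exact fun hx => hx.trans (htop x (ht.trans hx))
  refine List.lex_lt_of_countP_le_of_countP_lt (t₀ := t₀) (psi_pairwise_ge U C)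
    (psi_pairwise_ge U C') (fun t ht => ?_) ?_
  · simp only [psi_countP_le]
    exact card_le_card (hsub t ht)
  · simp only [psi_countP_le]
    refine card_lt_card ((ssubset_iff_of_subset (hsub t₀ le_rfl)).mpr ⟨i, ?_, ?_⟩)
    · simpa using hi'
    · simpa using hi

end Psi

section Partition

variable {α : Type*} [DecidableEq α] {C : α → Finset α}

lemma IsPartitionFn.eq_of_mem (hC : IsPartitionFn C) {i j : α} (h : i ∈ C j) : C i = C j :=
  hC.2 i j h

def splitOff (C : α → Finset α) (S : Finset α) (x : α) : Finset α :=
  if x ∈ S then S else C x \ S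

lemma splitOff_of_mem {S : Finset α} {x : α} (hx : x ∈ S) : splitOff C S x = S :=
  if_pos hx

lemma IsPartitionFn.splitOff_of_notMem (hC : IsPartitionFn C) {S : Finset α} {x : α}
    (hx : x ∉ S) (hS : ∀ j ∈ S, C j ≠ C x) : splitOff C S x = C x := by
  refine (if_neg hx).trans (Finset.sdiff_eq_self_of_disjoint ?_)
  exact Finset.disjoint_left.mpr fun j hj hjS => hS j hjS (hC.eq_of_mem hj)

lemma isPartitionFn_splitOff (hC : IsPartitionFn C) (S : Finset α) :
    IsPartitionFn (splitOff C S) := by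
  refine ⟨fun x => ?_, fun x y hxy => ?_⟩
  · by_cases hx : x ∈ S
    · simp [splitOff, hx]
    · simpa [splitOff, hx] using hC.1 x
  · by_cases hy : y ∈ S
    · simp_all [splitOff]
    · simp only [splitOff, hy, if_false, Finset.mem_sdiff] at hxy ⊢
      simp [hxy.2, hC.eq_of_mem hxy.1]

end Partition

section Stability

variable {α : Type*} [Fintype α] [DecidableEq α] {U : Finset α → ℝ} {C : α → Finset α}

def IsLexMaximal (U : Finset α → ℝ) (C : α → Finset α) : Prop :=
  ∀ C' : α → Finset α, IsPartitionFn C' → ¬ List.Lex (· < ·) (psi U C) (psi U C')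

lemma IsLexMaximal.paretoOptimal (hmax : IsLexMaximal U C) : ParetoOptimal U C := by
  rintro ⟨C', hC', hdom, i, hi⟩
  exact hmax C' hC' (psi_lex_lt_of_threshold (U (C' i)) (fun x _ => hdom x) ⟨i, hi, le_rfl⟩)

lemma IsLexMaximal.coreStable (hC : IsPartitionFn C) (hmax : IsLexMaximal U C) :
    CoreStable U C := by
  rintro ⟨S, ⟨i, hi⟩, hblock⟩
  refine hmax _ (isPartitionFn_splitOff hC S)
    (psi_lex_lt_of_threshold (U S) (fun x hx => ?_) ⟨i, hblock i hi, ?_⟩)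
  · have hxS : x ∉ S := fun h => (hblock x h).not_ge hx
    have hS : ∀ j ∈ S, C j ≠ C x := fun j hj hjx => (hblock j hj).not_ge (hjx ▸ hx)
    rw [hC.splitOff_of_notMem hxS hS]
  · rw [splitOff_of_mem hi]

lemma IsLexMaximal.individuallyStable (hC : IsPartitionFn C) (hmax : IsLexMaximal U C) :
    IndividuallyStable U C := by
  rintro ⟨i, T, -, hT, hlt⟩
  have hTcoal : ∀ x ∈ T, C x = T ∧ U T ≤ U (insert i T) := by
    intro x hx
    rcases hT with rfl | ⟨⟨j, rfl⟩, hUT⟩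
    · simp at hx
    · exact ⟨hC.eq_of_mem hx, hUT⟩
  refine hmax _ (isPartitionFn_splitOff hC (insert i T))
    (psi_lex_lt_of_threshold (U (insert i T)) (fun x hx => ?_) ⟨i, hlt, ?_⟩)
  · by_cases hxT : x ∈ T
    · rw [splitOff_of_mem (Finset.mem_insert_of_mem hxT), (hTcoal x hxT).1]
      exact (hTcoal x hxT).2
    · have hxi : x ≠ i := by rintro rfl; exact hlt.not_ge hx
      have hS : ∀ j ∈ insert i T, C j ≠ C x := by
        intro j hj hjx
        rcases Finset.mem_insert.mp hj with rfl | hjT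
        · exact hlt.not_ge (hjx ▸ hx)
        · exact hxT ((hTcoal j hjT).1 ▸ hjx ▸ hC.1 x)
      rw [hC.splitOff_of_notMem (by simp [hxi, hxT]) hS]
  · rw [splitOff_of_mem (Finset.mem_insert_self i T)]

end Stability

theorem stmt4_general {α : Type*} [Fintype α] [DecidableEq α]
    (U : Finset α → ℝ)
    (Cstar : α → Finset α) (hCstar : IsPartitionFn Cstar)
    (hmax : ∀ C : α → Finset α, IsPartitionFn C →
      ¬ List.Lex (· < ·) (psi U Cstar) (psi U C)) :
    ParetoOptimal U Cstar ∧ CoreStable U Cstar ∧ IndividuallyStable U Cstar :=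
  ⟨IsLexMaximal.paretoOptimal hmax, IsLexMaximal.coreStable hCstar hmax,
    IsLexMaximal.individuallyStable hCstar hmax⟩

/-- A partition maximizing the lexicographic order of the non-increasingly sorted utility
sequence over all partitions is Pareto optimal, core stable and individually stable. -/
theorem stmt4 {α : Type*} [Fintype α] [DecidableEq α] [Nonempty α]
    (U : Finset α → ℝ) (hU : ∀ S : Finset α, 0 ≤ U S)
    (Cstar : α → Finset α) (hCstar : IsPartitionFn Cstar)
    (hmax : ∀ C : α → Finset α, IsPartitionFn C →
      ¬ List.Lex (· < ·) (psi U Cstar) (psi U C)) :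
    ParetoOptimal U Cstar ∧ CoreStable U Cstar ∧ IndividuallyStable U Cstar :=
  stmt4_general U Cstar hCstar hmax
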